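/- arXiv:2110.03102 — 5 statements merged into one kernel-verified Lean document; each statement's English description precedes it below -/
import Mathlib

section
/- Let X and Y be Banach spaces over 𝕜 (𝕜 = ℝ or ℂ), let M ⊆ X and N ⊆ Y be linear submanifolds, and suppose there exist bounded linear operators T : X → X and S : Y → Y such that the kernel of T is a complemented subspace of X, the kernel of S is a complemented subspace of Y, the closure M⁻ of M equals ker(T), and the closure N⁻ of N equals ker(S). Then every bounded bilinear map φ : M × N → Z into an arbitrary Banach space Z admits a bounded bilinear extension φ̂ : X × Y → Z over X × Y. -/
/-!
A bounded linear map on `M` extends by uniform continuity to the closure `M⁻`, and then to all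
of `X` by composing with a bounded projection `X → M⁻`. Applying this first in the variable
from `M` (with values in the Banach space `N →L Z`) and then, after flipping, in the variable
from `N` (with values in `X →L Z`) extends `φ`.
-/

namespace Submodule

section Extension

variable {R X W : Type*} [Ring R] [TopologicalSpace R]
  [AddCommGroup X] [Module R X] [UniformSpace X] [IsUniformAddGroup X] [ContinuousSMul R X]
  [AddCommGroup W] [Module R W] [UniformSpace W] [IsUniformAddGroup W] [ContinuousConstSMul R W]
  [CompleteSpace W] [T0Space W]

theorem exists_extension_to_topologicalClosure (M : Submodule R X) (φ : M →L[R] W) :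
    ∃ ψ : M.topologicalClosure →L[R] W,
      ∀ m : M, ψ (inclusion M.le_topologicalClosure m) = φ m := by
  have : IsUniformAddGroup M := M.toAddSubgroup.isUniformAddGroup
  let e : M →L[R] M.topologicalClosure :=
    M.subtypeL.codRestrict _ fun m => M.le_topologicalClosure m.2
  have he_dense : DenseRange e :=
    (denseRange_inclusion_iff M.le_topologicalClosure).2 subset_rfl
  have he_unif : IsUniformInducing e :=
    (isUniformInducing_val _).of_comp_iff.1 (isUniformInducing_val _)
  exact ⟨φ.extend e, φ.extend_eq he_dense he_unif⟩

theorem exists_extension_of_closedComplemented_topologicalClosure (M : Submodule R X)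
    (hM : M.topologicalClosure.ClosedComplemented) (φ : M →L[R] W) :
    ∃ f : X →L[R] W, ∀ m : M, f m = φ m :=
  let ⟨ψ, hψ⟩ := M.exists_extension_to_topologicalClosure φ
  let ⟨P, hP⟩ := hM
  ⟨ψ.comp P, fun m => (congrArg ψ (hP (inclusion _ m))).trans (hψ m)⟩

end Extension

theorem exists_extension₂_of_closedComplemented_topologicalClosure
    {𝕜 X Y Z : Type*} [NontriviallyNormedField 𝕜]
    [SeminormedAddCommGroup X] [NormedSpace 𝕜 X] [SeminormedAddCommGroup Y] [NormedSpace 𝕜 Y]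
    [NormedAddCommGroup Z] [NormedSpace 𝕜 Z] [CompleteSpace Z]
    {M : Submodule 𝕜 X} {N : Submodule 𝕜 Y} (hM : M.topologicalClosure.ClosedComplemented)
    (hN : N.topologicalClosure.ClosedComplemented) (φ : M →L[𝕜] N →L[𝕜] Z) :
    ∃ φhat : X →L[𝕜] Y →L[𝕜] Z, ∀ (u : M) (v : N), φhat u v = φ u v := by
  obtain ⟨f, hf⟩ := M.exists_extension_of_closedComplemented_topologicalClosure hM φ
  obtain ⟨g, hg⟩ := N.exists_extension_of_closedComplemented_topologicalClosure hN f.flip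
  exact ⟨g.flip, fun u v => by simp only [ContinuousLinearMap.flip_apply, hg, hf]⟩

end Submodule

theorem stmt_7_general {𝕜 : Type*} [RCLike 𝕜]
    {X Y Z : Type*}
    [NormedAddCommGroup X] [NormedSpace 𝕜 X]
    [NormedAddCommGroup Y] [NormedSpace 𝕜 Y]
    [NormedAddCommGroup Z] [NormedSpace 𝕜 Z] [CompleteSpace Z]
    (M : Submodule 𝕜 X) (N : Submodule 𝕜 Y)
    (T : X →L[𝕜] X) (S : Y →L[𝕜] Y)
    (hT : (LinearMap.ker (T : X →ₗ[𝕜] X)).ClosedComplemented)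
    (hS : (LinearMap.ker (S : Y →ₗ[𝕜] Y)).ClosedComplemented)
    (hMT : M.topologicalClosure = LinearMap.ker (T : X →ₗ[𝕜] X))
    (hNS : N.topologicalClosure = LinearMap.ker (S : Y →ₗ[𝕜] Y))
    (φ : M →L[𝕜] N →L[𝕜] Z) :
    ∃ φhat : X →L[𝕜] Y →L[𝕜] Z,
      ∀ (u : M) (v : N), φhat (u : X) (v : Y) = φ u v :=
  Submodule.exists_extension₂_of_closedComplemented_topologicalClosure
    (hMT ▸ hT) (hNS ▸ hS) φ

/-- If `M⁻ = ker T` and `N⁻ = ker S` for bounded operators `T`, `S` whose kernels are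
complemented subspaces, then every bounded bilinear map `φ : M × N → Z` into an arbitrary
Banach space `Z` has a bounded bilinear extension over `X × Y`. -/
theorem stmt_7 {𝕜 : Type*} [RCLike 𝕜]
    {X Y Z : Type*}
    [NormedAddCommGroup X] [NormedSpace 𝕜 X] [CompleteSpace X]
    [NormedAddCommGroup Y] [NormedSpace 𝕜 Y] [CompleteSpace Y]
    [NormedAddCommGroup Z] [NormedSpace 𝕜 Z] [CompleteSpace Z]
    (M : Submodule 𝕜 X) (N : Submodule 𝕜 Y)
    (T : X →L[𝕜] X) (S : Y →L[𝕜] Y)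
    (hT : (LinearMap.ker (T : X →ₗ[𝕜] X)).ClosedComplemented)
    (hS : (LinearMap.ker (S : Y →ₗ[𝕜] Y)).ClosedComplemented)
    (hMT : M.topologicalClosure = LinearMap.ker (T : X →ₗ[𝕜] X))
    (hNS : N.topologicalClosure = LinearMap.ker (S : Y →ₗ[𝕜] Y))
    (φ : M →L[𝕜] N →L[𝕜] Z) :
    ∃ φhat : X →L[𝕜] Y →L[𝕜] Z,
      ∀ (u : M) (v : N), φhat (u : X) (v : Y) = φ u v :=
  stmt_7_general M N T S hT hS hMT hNS φ
end

section
/- Let ℝ² be the real Euclidean plane, let M = {(0,t) : t ∈ ℝ} ⊆ ℝ² (the range of the projection E(x₁,x₂) = (0, x₁ + x₂)), and let φ̂ : ℝ² × ℝ² → ℝ be the bounded bilinear form φ̂((x₁,x₂),(y₁,y₂)) = x₂·y₂. Then ‖φ̂‖ = 1 and the restriction φ = φ̂|_{M×M} also has norm ‖φ‖ = 1; hence φ admits a norm-preserving bilinear extension to ℝ² × ℝ² even though the projection E onto M has norm √2 ≠ 1 (so the converse of the norm-one projection criterion fails). -/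
/-! All three norms are computed by a bound together with a vector attaining it: both forms satisfy
`|x₂ y₂| ≤ ‖x‖ ‖y‖`, with equality at `(0,1) ∈ M`, and `‖E x‖ = |x₁ + x₂| ≤ √2 ‖x‖` by
Cauchy–Schwarz, with equality at `(1,1)`. -/

/-- The canonical operator-norm group structure on `N →L[𝕜] Z` for a submodule `N`;
this is definitionally the canonical Mathlib instance, registered to help instance search. -/
noncomputable instance instCLMNormedAddCommGroupOfSubmodule {𝕜 : Type*} [RCLike 𝕜] {Y Z : Type*}
    [NormedAddCommGroup Y] [NormedSpace 𝕜 Y]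
    [NormedAddCommGroup Z] [NormedSpace 𝕜 Z] (N : Submodule 𝕜 Y) :
    NormedAddCommGroup (↥N →L[𝕜] Z) := inferInstance

/-- The canonical normed-space structure on `N →L[𝕜] Z` for a submodule `N`;
this is definitionally the canonical Mathlib instance, registered to help instance search. -/
noncomputable instance instCLMNormedSpaceOfSubmodule {𝕜 : Type*} [RCLike 𝕜] {Y Z : Type*}
    [NormedAddCommGroup Y] [NormedSpace 𝕜 Y]
    [NormedAddCommGroup Z] [NormedSpace 𝕜 Z] (N : Submodule 𝕜 Y) :
    NormedSpace 𝕜 (↥N →L[𝕜] Z) := inferInstance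

namespace ContinuousLinearMap

variable {𝕜 E F G : Type*} [NontriviallyNormedField 𝕜] [NormedAddCommGroup E] [NormedSpace 𝕜 E]
  [NormedAddCommGroup F] [NormedSpace 𝕜 F] [NormedAddCommGroup G] [NormedSpace 𝕜 G]

theorem opNorm_eq_of_bound_of_apply_eq {f : E →L[𝕜] F} {C : ℝ} (hC : 0 ≤ C)
    (hbound : ∀ x, ‖f x‖ ≤ C * ‖x‖) {x : E} (hx : x ≠ 0) (hfx : ‖f x‖ = C * ‖x‖) :
    ‖f‖ = C :=
  le_antisymm (f.opNorm_le_bound hC hbound) <|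
    le_of_mul_le_mul_right (hfx ▸ f.le_opNorm x) (norm_pos_iff.2 hx)

theorem opNorm₂_eq_of_bound_of_apply_eq {f : E →L[𝕜] F →L[𝕜] G} {C : ℝ} (hC : 0 ≤ C)
    (hbound : ∀ x y, ‖f x y‖ ≤ C * ‖x‖ * ‖y‖) {x : E} {y : F} (hx : x ≠ 0) (hy : y ≠ 0)
    (hfxy : ‖f x y‖ = C * ‖x‖ * ‖y‖) : ‖f‖ = C := by
  refine le_antisymm (f.opNorm_le_bound₂ hC hbound) (le_of_mul_le_mul_right ?_
    (mul_pos (norm_pos_iff.2 hx) (norm_pos_iff.2 hy)))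
  simpa only [mul_assoc, hfxy] using f.le_opNorm₂ x y

end ContinuousLinearMap

theorem EuclideanSpace.abs_apply_mul_apply_le {ι : Type*} [Fintype ι]
    (x y : EuclideanSpace ℝ ι) (i : ι) : |x i * y i| ≤ ‖x‖ * ‖y‖ := by
  rw [abs_mul, ← Real.norm_eq_abs, ← Real.norm_eq_abs]
  exact mul_le_mul (PiLp.norm_apply_le x i) (PiLp.norm_apply_le y i) (norm_nonneg _)
    (norm_nonneg _)

theorem EuclideanSpace.norm_fin_two (x : EuclideanSpace ℝ (Fin 2)) :
    ‖x‖ = √(x 0 ^ 2 + x 1 ^ 2) := by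
  rw [EuclideanSpace.norm_eq, Fin.sum_univ_two, Real.norm_eq_abs, Real.norm_eq_abs, sq_abs,
    sq_abs]

theorem abs_add_le_sqrt_two_mul_sqrt (a b : ℝ) : |a + b| ≤ √2 * √(a ^ 2 + b ^ 2) := by
  rw [← Real.sqrt_sq_eq_abs, ← Real.sqrt_mul zero_le_two]
  exact Real.sqrt_le_sqrt (by nlinarith [sq_nonneg (a - b)])

/-- Counterexample to the converse of the norm-one projection criterion: on the Euclidean
plane, with `M = {(0,t) : t ∈ ℝ}` (the range of the projection `E(x₁,x₂) = (0, x₁+x₂)`,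
which has norm `√2 ≠ 1`), the bilinear form `φ̂((x₁,x₂),(y₁,y₂)) = x₂y₂` has norm one,
its restriction `φ` to `M × M` has norm one, and `φ̂` is a bilinear extension of `φ`;
so `φ` has a norm-preserving bilinear extension even though `‖E‖ = √2 ≠ 1`. -/
theorem stmt_9 (E : EuclideanSpace ℝ (Fin 2) →L[ℝ] EuclideanSpace ℝ (Fin 2))
    (hE : ∀ x : EuclideanSpace ℝ (Fin 2), E x 0 = 0 ∧ E x 1 = x 0 + x 1)
    (M : Submodule ℝ (EuclideanSpace ℝ (Fin 2)))
    (hM : M = LinearMap.range (E : EuclideanSpace ℝ (Fin 2) →ₗ[ℝ] EuclideanSpace ℝ (Fin 2)))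
    (φhat : EuclideanSpace ℝ (Fin 2) →L[ℝ] EuclideanSpace ℝ (Fin 2) →L[ℝ] ℝ)
    (hφhat : ∀ x y : EuclideanSpace ℝ (Fin 2), φhat x y = x 1 * y 1)
    (φ : M →L[ℝ] M →L[ℝ] ℝ)
    (hφ : ∀ (u v : M), φ u v = φhat (u : EuclideanSpace ℝ (Fin 2)) (v : EuclideanSpace ℝ (Fin 2))) :
    ‖φhat‖ = 1 ∧ ‖φ‖ = 1 ∧ ‖E‖ = Real.sqrt 2 ∧ Real.sqrt 2 ≠ 1 := by
  set e₂ : EuclideanSpace ℝ (Fin 2) := !₂[0, 1]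
  have he₂ : e₂ ∈ M := hM ▸ ⟨!₂[1, 0], by ext i; fin_cases i <;> simp [hE, e₂]⟩
  have he₂_ne : e₂ ≠ 0 := fun h => by simpa [e₂] using congrArg (· 1) h
  have hφhat_e₂ : ‖φhat e₂ e₂‖ = 1 * ‖e₂‖ * ‖e₂‖ := by
    simp [hφhat, EuclideanSpace.norm_fin_two, e₂]
  have hφhat_bound : ∀ x y, ‖φhat x y‖ ≤ 1 * ‖x‖ * ‖y‖ := fun x y => by
    simpa [hφhat] using EuclideanSpace.abs_apply_mul_apply_le x y 1
  have hEx : ∀ x, ‖E x‖ = |x 0 + x 1| := fun x => by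
    rw [EuclideanSpace.norm_fin_two, (hE x).1, (hE x).2, zero_pow two_ne_zero, zero_add,
      Real.sqrt_sq_eq_abs]
  refine ⟨?_, ?_, ?_, ?_⟩
  · exact φhat.opNorm₂_eq_of_bound_of_apply_eq zero_le_one hφhat_bound he₂_ne he₂_ne hφhat_e₂
  · exact φ.opNorm₂_eq_of_bound_of_apply_eq (x := ⟨e₂, he₂⟩) (y := ⟨e₂, he₂⟩) zero_le_one
      (fun u v => by rw [hφ]; exact hφhat_bound u v) (by simpa using he₂_ne)
      (by simpa using he₂_ne) (by rw [hφ]; exact hφhat_e₂)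
  · refine E.opNorm_eq_of_bound_of_apply_eq (x := !₂[1, 1]) (Real.sqrt_nonneg 2)
      (fun x => by rw [hEx, EuclideanSpace.norm_fin_two]; exact abs_add_le_sqrt_two_mul_sqrt _ _)
      (fun h => by simpa using congrArg (· 0) h) ?_
    rw [hEx, EuclideanSpace.norm_fin_two]
    norm_num
  · rw [Ne, Real.sqrt_eq_one]
    norm_num
end

section
/- Let M ⊆ X and N ⊆ Y be closed subspaces of Banach spaces X, Y over 𝕜 (𝕜 = ℝ or ℂ), and suppose there exist continuous linear projections E : X → X and P : Y → Y with range(E) = M, range(P) = N and ‖E‖ = ‖P‖ = 1. Then for every F in the algebraic tensor product M ⊗ N, the projective norm of F computed in M ⊗ N equals the projective norm of its canonical image in X ⊗ Y: ‖F‖_{π, M⊗N} = ‖ι(F)‖_{π, X⊗Y}, where ι : M ⊗ N → X ⊗ Y is induced by the inclusions. -/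
/-- The projective norm of an element `F` of the algebraic tensor product `X ⊗ Y` of two
normed spaces: the infimum of `Σᵢ ‖xᵢ‖·‖yᵢ‖` over all finite representations
`F = Σᵢ xᵢ ⊗ yᵢ`. -/
noncomputable def projNorm (𝕜 : Type*) [RCLike 𝕜] {X Y : Type*}
    [NormedAddCommGroup X] [NormedSpace 𝕜 X]
    [NormedAddCommGroup Y] [NormedSpace 𝕜 Y]
    (F : TensorProduct 𝕜 X Y) : ℝ :=
  sInf {r : ℝ | ∃ (n : ℕ) (x : Fin n → X) (y : Fin n → Y),
    F = ∑ i, x i ⊗ₜ[𝕜] y i ∧ r = ∑ i, ‖x i‖ * ‖y i‖}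

/-
Every representation `Σ xᵢ ⊗ yᵢ` of an element of `X ⊗ Y` is pushed by `map f g` to a
representation `Σ f xᵢ ⊗ g yᵢ` of its image, of no larger cost when `f` and `g` are contractions.
So the inclusion `M ⊗ N → X ⊗ Y` does not increase the projective norm, and neither does its
left inverse `E ⊗ P`, obtained by restricting the codomains of the norm-one projections.
-/

open TensorProduct

theorem TensorProduct.exists_fin_sum_tmul_eq {R M N : Type*} [CommSemiring R]
    [AddCommMonoid M] [Module R M] [AddCommMonoid N] [Module R N] (F : M ⊗[R] N) :
    ∃ (n : ℕ) (x : Fin n → M) (y : Fin n → N), F = ∑ i, x i ⊗ₜ[R] y i := by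
  induction F using TensorProduct.induction_on with
  | zero => exact ⟨0, ![], ![], by simp⟩
  | tmul a b => exact ⟨1, ![a], ![b], by simp⟩
  | add F G hF hG =>
    obtain ⟨n, x, y, rfl⟩ := hF
    obtain ⟨m, x', y', rfl⟩ := hG
    exact ⟨n + m, Fin.append x x', Fin.append y y', by simp [Fin.sum_univ_add]⟩

section ProjNorm

variable {𝕜 : Type*} [RCLike 𝕜] {X Y X' Y' : Type*}
  [NormedAddCommGroup X] [NormedSpace 𝕜 X] [NormedAddCommGroup Y] [NormedSpace 𝕜 Y]
  [NormedAddCommGroup X'] [NormedSpace 𝕜 X'] [NormedAddCommGroup Y'] [NormedSpace 𝕜 Y']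

theorem projNorm_le_of_eq_sum {F : X ⊗[𝕜] Y} {n : ℕ} {x : Fin n → X} {y : Fin n → Y}
    (hF : F = ∑ i, x i ⊗ₜ[𝕜] y i) : projNorm 𝕜 F ≤ ∑ i, ‖x i‖ * ‖y i‖ := by
  refine csInf_le ⟨0, ?_⟩ ⟨n, x, y, hF, rfl⟩
  rintro r ⟨n, x, y, -, rfl⟩
  positivity

theorem le_projNorm {F : X ⊗[𝕜] Y} {c : ℝ}
    (h : ∀ (n : ℕ) (x : Fin n → X) (y : Fin n → Y),
      F = ∑ i, x i ⊗ₜ[𝕜] y i → c ≤ ∑ i, ‖x i‖ * ‖y i‖) :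
    c ≤ projNorm 𝕜 F := by
  obtain ⟨n, x, y, hF⟩ := F.exists_fin_sum_tmul_eq
  refine le_csInf ⟨_, n, x, y, hF, rfl⟩ ?_
  rintro r ⟨n, x, y, hF, rfl⟩
  exact h n x y hF

theorem projNorm_map_le {f : X →ₗ[𝕜] X'} {g : Y →ₗ[𝕜] Y'}
    (hf : ∀ x, ‖f x‖ ≤ ‖x‖) (hg : ∀ y, ‖g y‖ ≤ ‖y‖) (F : X ⊗[𝕜] Y) :
    projNorm 𝕜 (map f g F) ≤ projNorm 𝕜 F := by
  refine le_projNorm fun n x y hF => ?_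
  calc projNorm 𝕜 (map f g F)
      ≤ ∑ i, ‖f (x i)‖ * ‖g (y i)‖ := projNorm_le_of_eq_sum (by simp [hF])
    _ ≤ ∑ i, ‖x i‖ * ‖y i‖ := by gcongr with i <;> simp only [hf, hg]

theorem projNorm_map_subtype_eq {M : Submodule 𝕜 X} {N : Submodule 𝕜 Y}
    {r : X →ₗ[𝕜] M} {s : Y →ₗ[𝕜] N} (hr : ∀ x, ‖r x‖ ≤ ‖x‖) (hs : ∀ y, ‖s y‖ ≤ ‖y‖)
    (hrM : r ∘ₗ M.subtype = .id) (hsN : s ∘ₗ N.subtype = .id) (F : M ⊗[𝕜] N) :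
    projNorm 𝕜 (map M.subtype N.subtype F) = projNorm 𝕜 F := by
  refine le_antisymm (projNorm_map_le (fun _ => le_rfl) (fun _ => le_rfl) F) ?_
  calc projNorm 𝕜 F = projNorm 𝕜 (map r s (map M.subtype N.subtype F)) := by
        rw [← LinearMap.comp_apply, ← map_comp, hrM, hsN, map_id, LinearMap.id_apply]
    _ ≤ projNorm 𝕜 (map M.subtype N.subtype F) := projNorm_map_le hr hs _

end ProjNorm

theorem ContinuousLinearMap.isProj_range {𝕜 X : Type*} [RCLike 𝕜] [NormedAddCommGroup X]
    [NormedSpace 𝕜 X] {E : X →L[𝕜] X} (hE : E.comp E = E) :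
    LinearMap.IsProj (LinearMap.range (E : X →ₗ[𝕜] X)) (E : X →ₗ[𝕜] X) :=
  LinearMap.IsIdempotentElem.isProj_range _ <| by
    rw [IsIdempotentElem, Module.End.mul_eq_comp, ← ContinuousLinearMap.toLinearMap_comp, hE]

theorem LinearMap.IsProj.norm_codRestrict_le {𝕜 X : Type*} [RCLike 𝕜] [NormedAddCommGroup X]
    [NormedSpace 𝕜 X] {M : Submodule 𝕜 X} {E : X →L[𝕜] X}
    (h : LinearMap.IsProj M (E : X →ₗ[𝕜] X)) (hE : ‖E‖ ≤ 1) (x : X) :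
    ‖h.codRestrict x‖ ≤ ‖x‖ := by
  simpa [Submodule.coe_norm] using E.le_of_opNorm_le hE x

theorem LinearMap.IsProj.codRestrict_comp_subtype {R M : Type*} [Semiring R] [AddCommMonoid M]
    [Module R M] {p : Submodule R M} {f : M →ₗ[R] M} (h : LinearMap.IsProj p f) :
    h.codRestrict ∘ₗ p.subtype = .id :=
  LinearMap.ext h.codRestrict_apply_cod

theorem stmt_12_general {𝕜 : Type*} [RCLike 𝕜] {X Y : Type*}
    [NormedAddCommGroup X] [NormedSpace 𝕜 X]
    [NormedAddCommGroup Y] [NormedSpace 𝕜 Y]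
    (M : Submodule 𝕜 X) (N : Submodule 𝕜 Y)
    (E : X →L[𝕜] X) (P : Y →L[𝕜] Y)
    (hE : E.comp E = E) (hP : P.comp P = P)
    (hER : LinearMap.range (E : X →ₗ[𝕜] X) = M) (hPR : LinearMap.range (P : Y →ₗ[𝕜] Y) = N)
    (hEnorm : ‖E‖ = 1) (hPnorm : ‖P‖ = 1)
    (F : TensorProduct 𝕜 M N) :
    projNorm 𝕜 F = projNorm 𝕜 (TensorProduct.map M.subtype N.subtype F) := by
  have hEM : LinearMap.IsProj M (E : X →ₗ[𝕜] X) := hER ▸ E.isProj_range hE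
  have hPN : LinearMap.IsProj N (P : Y →ₗ[𝕜] Y) := hPR ▸ P.isProj_range hP
  exact (projNorm_map_subtype_eq (hEM.norm_codRestrict_le hEnorm.le)
    (hPN.norm_codRestrict_le hPnorm.le) hEM.codRestrict_comp_subtype
    hPN.codRestrict_comp_subtype F).symm

/-- If `M`, `N` are ranges of norm-one continuous projections on Banach spaces `X`, `Y`,
then the projective norm on `M ⊗ N` agrees with the projective norm induced from `X ⊗ Y`. -/
theorem stmt_12 {𝕜 : Type*} [RCLike 𝕜] {X Y : Type*}
    [NormedAddCommGroup X] [NormedSpace 𝕜 X] [CompleteSpace X]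
    [NormedAddCommGroup Y] [NormedSpace 𝕜 Y] [CompleteSpace Y]
    (M : Submodule 𝕜 X) (N : Submodule 𝕜 Y)
    (hMc : IsClosed (M : Set X)) (hNc : IsClosed (N : Set Y))
    (E : X →L[𝕜] X) (P : Y →L[𝕜] Y)
    (hE : E.comp E = E) (hP : P.comp P = P)
    (hER : LinearMap.range (E : X →ₗ[𝕜] X) = M) (hPR : LinearMap.range (P : Y →ₗ[𝕜] Y) = N)
    (hEnorm : ‖E‖ = 1) (hPnorm : ‖P‖ = 1)
    (F : TensorProduct 𝕜 M N) :
    projNorm 𝕜 F = projNorm 𝕜 (TensorProduct.map M.subtype N.subtype F) :=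
  stmt_12_general M N E P hE hP hER hPR hEnorm hPnorm F
end

section
/- Let X and Y be Banach spaces over 𝕜 (𝕜 = ℝ or ℂ). For every F in the algebraic tensor product X ⊗ Y, the projective norm satisfies ‖F‖_π = sup { ‖Φ_φ(F)‖ : φ a bounded bilinear form on X × Y with ‖φ‖ ≤ 1 }, where Φ_φ : X ⊗ Y → 𝕜 denotes the linear functional induced by φ (so that Φ_φ(Σᵢ xᵢ ⊗ yᵢ) = Σᵢ φ(xᵢ, yᵢ)). -/
/-!
A bilinear form of norm at most one is bounded by `‖x‖ * ‖y‖` on elementary tensors, so its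
induced functional is bounded by the projective norm on every representation, hence by the
infimum. Conversely, the projective norm is a seminorm on `X ⊗ Y`, so Hahn–Banach gives a
functional `g` dominated by it with `g F = ‖F‖_π`; since `‖x ⊗ y‖_π ≤ ‖x‖ * ‖y‖`, the form
`(x, y) ↦ g (x ⊗ y)` has norm at most one and attains the supremum.
-/

open scoped TensorProduct Pointwise

theorem Seminorm.exists_dual_le_apply_eq {𝕜 E : Type*} [RCLike 𝕜] [AddCommGroup E]
    [Module 𝕜 E] (p : Seminorm 𝕜 E) (x : E) :
    ∃ g : Module.Dual 𝕜 E, (∀ y, ‖g y‖ ≤ p y) ∧ g x = p x := by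
  let := p.toSeminormedAddCommGroup
  let _ : NormedSpace 𝕜 E := ⟨fun c y => (map_smul_eq_mul p c y).le⟩
  obtain ⟨g, hg, hgx⟩ := exists_dual_vector'' 𝕜 x
  exact ⟨g, fun y => (g.le_opNorm y).trans (mul_le_of_le_one_left (norm_nonneg _) hg), hgx⟩

section ProjectiveNorm

variable {𝕜 : Type*} [RCLike 𝕜] {X Y : Type*}
  [NormedAddCommGroup X] [NormedSpace 𝕜 X] [NormedAddCommGroup Y] [NormedSpace 𝕜 Y]

def representationCosts (F : X ⊗[𝕜] Y) : Set ℝ :=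
  {r : ℝ | ∃ (n : ℕ) (x : Fin n → X) (y : Fin n → Y),
    F = ∑ i, x i ⊗ₜ[𝕜] y i ∧ r = ∑ i, ‖x i‖ * ‖y i‖}

theorem projNorm_eq_sInf (F : X ⊗[𝕜] Y) : projNorm 𝕜 F = sInf (representationCosts F) := rfl

theorem nonneg_of_mem_representationCosts {F : X ⊗[𝕜] Y} {r : ℝ}
    (hr : r ∈ representationCosts F) : 0 ≤ r := by
  obtain ⟨n, x, y, -, rfl⟩ := hr
  exact Finset.sum_nonneg fun i _ => mul_nonneg (norm_nonneg _) (norm_nonneg _)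

theorem bddBelow_representationCosts (F : X ⊗[𝕜] Y) : BddBelow (representationCosts F) :=
  ⟨0, fun _ => nonneg_of_mem_representationCosts⟩

theorem representationCosts_add_subset (F G : X ⊗[𝕜] Y) :
    representationCosts F + representationCosts G ⊆ representationCosts (F + G) := by
  rintro _ ⟨_, ⟨n, x, y, rfl, rfl⟩, _, ⟨m, x', y', rfl, rfl⟩, rfl⟩
  exact ⟨n + m, Fin.append x x', Fin.append y y', by simp [Fin.sum_univ_add],
    by simp [Fin.sum_univ_add]⟩

theorem norm_smul_representationCosts_subset (c : 𝕜) (F : X ⊗[𝕜] Y) :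
    ‖c‖ • representationCosts F ⊆ representationCosts (c • F) := by
  rintro _ ⟨_, ⟨n, x, y, rfl, rfl⟩, rfl⟩
  refine ⟨n, fun i => c • x i, y, ?_, ?_⟩
  · simp only [Finset.smul_sum, TensorProduct.smul_tmul']
  · simp only [smul_eq_mul, Finset.mul_sum, norm_smul, mul_assoc]

theorem representationCosts_nonempty (F : X ⊗[𝕜] Y) : (representationCosts F).Nonempty := by
  induction F using TensorProduct.induction_on with
  | zero => exact ⟨0, 0, ![], ![], by simp, by simp⟩
  | tmul x y => exact ⟨_, 1, ![x], ![y], by simp, rfl⟩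
  | add F G hF hG => exact (hF.add hG).mono (representationCosts_add_subset F G)

theorem projNorm_nonneg (F : X ⊗[𝕜] Y) : 0 ≤ projNorm 𝕜 F :=
  le_csInf (representationCosts_nonempty F) fun _ => nonneg_of_mem_representationCosts

theorem projNorm_zero : projNorm 𝕜 (0 : X ⊗[𝕜] Y) = 0 :=
  le_antisymm (csInf_le (bddBelow_representationCosts 0) ⟨0, ![], ![], by simp, by simp⟩)
    (projNorm_nonneg 0)

theorem projNorm_add_le (F G : X ⊗[𝕜] Y) :
    projNorm 𝕜 (F + G) ≤ projNorm 𝕜 F + projNorm 𝕜 G := by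
  have hF := representationCosts_nonempty F
  have hG := representationCosts_nonempty G
  rw [projNorm_eq_sInf, projNorm_eq_sInf, projNorm_eq_sInf,
    ← csInf_add hF (bddBelow_representationCosts F) hG (bddBelow_representationCosts G)]
  exact csInf_le_csInf (bddBelow_representationCosts _) (hF.add hG)
    (representationCosts_add_subset F G)

theorem projNorm_smul_le (c : 𝕜) (F : X ⊗[𝕜] Y) :
    projNorm 𝕜 (c • F) ≤ ‖c‖ * projNorm 𝕜 F := by
  rw [projNorm_eq_sInf, projNorm_eq_sInf, ← smul_eq_mul,
    ← Real.sInf_smul_of_nonneg (norm_nonneg c)]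
  exact csInf_le_csInf (bddBelow_representationCosts _)
    ((representationCosts_nonempty F).smul_set) (norm_smul_representationCosts_subset c F)

variable (𝕜 X Y) in
noncomputable def projSeminorm : Seminorm 𝕜 (X ⊗[𝕜] Y) :=
  Seminorm.ofSMulLE (projNorm 𝕜) projNorm_zero projNorm_add_le projNorm_smul_le

theorem projNorm_tmul_le (x : X) (y : Y) : projNorm 𝕜 (x ⊗ₜ[𝕜] y) ≤ ‖x‖ * ‖y‖ :=
  csInf_le (bddBelow_representationCosts _) ⟨1, ![x], ![y], by simp, by simp⟩

theorem norm_apply_le_projNorm {E : Type*} [SeminormedAddCommGroup E] [Module 𝕜 E]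
    (f : X ⊗[𝕜] Y →ₗ[𝕜] E) (hf : ∀ x y, ‖f (x ⊗ₜ y)‖ ≤ ‖x‖ * ‖y‖) (F : X ⊗[𝕜] Y) :
    ‖f F‖ ≤ projNorm 𝕜 F := by
  refine le_csInf (representationCosts_nonempty F) ?_
  rintro _ ⟨n, x, y, rfl, rfl⟩
  rw [map_sum]
  exact (norm_sum_le _ _).trans (Finset.sum_le_sum fun i _ => hf _ _)

theorem exists_bilinear_norm_le_one_lift_eq (F : X ⊗[𝕜] Y) :
    ∃ φ : X →L[𝕜] Y →L[𝕜] 𝕜, ‖φ‖ ≤ 1 ∧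
      TensorProduct.lift ((ContinuousLinearMap.coeLM 𝕜).comp (φ : X →ₗ[𝕜] Y →L[𝕜] 𝕜)) F =
        projNorm 𝕜 F := by
  obtain ⟨g, hg, hgF⟩ := (projSeminorm 𝕜 X Y).exists_dual_le_apply_eq F
  have hbound (x : X) (y : Y) : ‖g (x ⊗ₜ y)‖ ≤ 1 * ‖x‖ * ‖y‖ := by
    rw [one_mul]
    exact (hg _).trans (projNorm_tmul_le x y)
  let φ := ((TensorProduct.mk 𝕜 X Y).compr₂ g).mkContinuous₂ 1 hbound
  have hlift : TensorProduct.lift ((ContinuousLinearMap.coeLM 𝕜).comp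
      (φ : X →ₗ[𝕜] Y →L[𝕜] 𝕜)) = g := TensorProduct.ext' fun _ _ => rfl
  exact ⟨φ, LinearMap.mkContinuous₂_norm_le _ zero_le_one hbound, by rw [hlift, hgF]; rfl⟩

end ProjectiveNorm

theorem stmt_13_general {𝕜 : Type*} [RCLike 𝕜] {X Y : Type*}
    [NormedAddCommGroup X] [NormedSpace 𝕜 X]
    [NormedAddCommGroup Y] [NormedSpace 𝕜 Y]
    (F : TensorProduct 𝕜 X Y) :
    projNorm 𝕜 F =
      sSup {r : ℝ | ∃ φ : X →L[𝕜] Y →L[𝕜] 𝕜, ‖φ‖ ≤ 1 ∧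
        r = ‖TensorProduct.lift
          ((ContinuousLinearMap.coeLM 𝕜).comp (φ : X →ₗ[𝕜] Y →L[𝕜] 𝕜)) F‖} := by
  refine (IsGreatest.csSup_eq ⟨?_, ?_⟩).symm
  · obtain ⟨φ, hφ, hF⟩ := exists_bilinear_norm_le_one_lift_eq F
    exact ⟨φ, hφ, by rw [hF, RCLike.norm_ofReal, abs_of_nonneg (projNorm_nonneg F)]⟩
  · rintro _ ⟨φ, hφ, rfl⟩
    refine norm_apply_le_projNorm _ (fun x y => ?_) F
    calc ‖φ x y‖ ≤ ‖φ‖ * ‖x‖ * ‖y‖ := φ.le_opNorm₂ x y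
      _ ≤ ‖x‖ * ‖y‖ := by
        rw [mul_assoc]
        exact mul_le_of_le_one_left (by positivity) hφ

/-- For Banach spaces `X`, `Y`, the projective norm of `F ∈ X ⊗ Y` equals the supremum of
`‖Φ_φ(F)‖` over all bounded bilinear forms `φ` on `X × Y` of norm at most one, where
`Φ_φ : X ⊗ Y → 𝕜` is the linear functional induced by `φ`. -/
theorem stmt_13 {𝕜 : Type*} [RCLike 𝕜] {X Y : Type*}
    [NormedAddCommGroup X] [NormedSpace 𝕜 X] [CompleteSpace X]
    [NormedAddCommGroup Y] [NormedSpace 𝕜 Y] [CompleteSpace Y]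
    (F : TensorProduct 𝕜 X Y) :
    projNorm 𝕜 F =
      sSup {r : ℝ | ∃ φ : X →L[𝕜] Y →L[𝕜] 𝕜, ‖φ‖ ≤ 1 ∧
        r = ‖TensorProduct.lift
          ((ContinuousLinearMap.coeLM 𝕜).comp (φ : X →ₗ[𝕜] Y →L[𝕜] 𝕜)) F‖} :=
  stmt_13_general F
end

section
/- Let X and Y be Hilbert spaces over 𝕜 (𝕜 = ℝ or ℂ) and let M ⊆ X and N ⊆ Y be closed subspaces. Then for every F in the algebraic tensor product M ⊗ N, the projective norm of F computed in M ⊗ N equals the projective norm of its canonical image in X ⊗ Y: ‖F‖_{π, M⊗N} = ‖ι(F)‖_{π, X⊗Y}, where ι : M ⊗ N → X ⊗ Y is induced by the inclusions. -/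
/-- For closed subspaces `M`, `N` of Hilbert spaces `X`, `Y`, the projective norm on
`M ⊗ N` agrees with the projective norm induced from `X ⊗ Y`. -/
theorem stmt_18 {𝕜 : Type*} [RCLike 𝕜] {X Y : Type*}
    [NormedAddCommGroup X] [InnerProductSpace 𝕜 X] [CompleteSpace X]
    [NormedAddCommGroup Y] [InnerProductSpace 𝕜 Y] [CompleteSpace Y]
    (M : Submodule 𝕜 X) (N : Submodule 𝕜 Y)
    (hMc : IsClosed (M : Set X)) (hNc : IsClosed (N : Set Y))
    (F : TensorProduct 𝕜 M N) :
    projNorm 𝕜 F = projNorm 𝕜 (TensorProduct.map M.subtype N.subtype F) := by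
  haveI : CompleteSpace M := hMc.completeSpace_coe
  haveI : CompleteSpace N := hNc.completeSpace_coe
  set P : X →L[𝕜] M := Submodule.orthogonalProjectionOnto M with hPdef
  set Q : Y →L[𝕜] N := Submodule.orthogonalProjectionOnto N with hQdef
  have hP : ∀ m : M, P (m : X) = m := fun m => Submodule.orthogonalProjectionOnto_mem_subspace_eq_self m
  have hQ : ∀ n : N, Q (n : Y) = n := fun n => Submodule.orthogonalProjectionOnto_mem_subspace_eq_self n
  have hPn : ∀ x : X, ‖P x‖ ≤ ‖x‖ := fun x =>
    calc ‖P x‖ ≤ ‖P‖ * ‖x‖ := P.le_opNorm x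
    _ ≤ 1 * ‖x‖ := by gcongr; exact Submodule.orthogonalProjectionOnto_norm_le M
    _ = ‖x‖ := one_mul _
  have hQn : ∀ y : Y, ‖Q y‖ ≤ ‖y‖ := fun y =>
    calc ‖Q y‖ ≤ ‖Q‖ * ‖y‖ := Q.le_opNorm y
    _ ≤ 1 * ‖y‖ := by gcongr; exact Submodule.orthogonalProjectionOnto_norm_le N
    _ = ‖y‖ := one_mul _
  -- a representation of F
  obtain ⟨S, hS⟩ := TensorProduct.exists_finset F
  have hArep : ∃ (n : ℕ) (x : Fin n → M) (y : Fin n → N), F = ∑ i, x i ⊗ₜ[𝕜] y i := by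
    refine ⟨S.card, fun i => (S.equivFin.symm i : M × N).1,
      fun i => (S.equivFin.symm i : M × N).2, ?_⟩
    rw [hS, ← Finset.sum_attach S (fun p => p.1 ⊗ₜ[𝕜] p.2)]
    exact Fintype.sum_equiv S.equivFin _ _ (fun p => by simp)
  -- the two sets
  set A := {r : ℝ | ∃ (n : ℕ) (x : Fin n → M) (y : Fin n → N),
    F = ∑ i, x i ⊗ₜ[𝕜] y i ∧ r = ∑ i, ‖x i‖ * ‖y i‖} with hA
  set B := {r : ℝ | ∃ (n : ℕ) (x : Fin n → X) (y : Fin n → Y),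
    TensorProduct.map M.subtype N.subtype F = ∑ i, x i ⊗ₜ[𝕜] y i ∧
      r = ∑ i, ‖x i‖ * ‖y i‖} with hB
  have hAne : A.Nonempty := by
    obtain ⟨n, x, y, hxy⟩ := hArep
    exact ⟨_, n, x, y, hxy, rfl⟩
  have hBne : B.Nonempty := by
    obtain ⟨n, x, y, hxy⟩ := hArep
    refine ⟨∑ i, ‖x i‖ * ‖y i‖, n, fun i => (x i : X), fun i => (y i : Y), ?_, rfl⟩
    rw [hxy, map_sum]
    simp [TensorProduct.map_tmul]
  have hAbd : BddBelow A := by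
    refine ⟨0, fun r hr => ?_⟩
    obtain ⟨n, x, y, _, hr⟩ := hr
    rw [hr]
    exact Finset.sum_nonneg fun i _ => mul_nonneg (norm_nonneg _) (norm_nonneg _)
  have hBbd : BddBelow B := by
    refine ⟨0, fun r hr => ?_⟩
    obtain ⟨n, x, y, _, hr⟩ := hr
    rw [hr]
    exact Finset.sum_nonneg fun i _ => mul_nonneg (norm_nonneg _) (norm_nonneg _)
  show sInf A = sInf B
  apply le_antisymm
  · -- pull back a representation using orthogonal projections
    refine le_csInf hBne fun r hr => ?_
    obtain ⟨n, x, y, hxy, hr⟩ := hr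
    refine le_trans (csInf_le hAbd
      (⟨n, fun i => P (x i), fun i => Q (y i), ?_, rfl⟩ : _ ∈ A)) ?_
    · have hcomp : TensorProduct.map (P : X →ₗ[𝕜] M) (Q : Y →ₗ[𝕜] N)
          (TensorProduct.map M.subtype N.subtype F) = F := by
        rw [← LinearMap.comp_apply, ← TensorProduct.map_comp]
        have h1 : (P : X →ₗ[𝕜] M) ∘ₗ M.subtype = LinearMap.id := by
          ext m; exact congrArg Subtype.val (hP m)
        have h2 : (Q : Y →ₗ[𝕜] N) ∘ₗ N.subtype = LinearMap.id := by
          ext m; exact congrArg Subtype.val (hQ m)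
        rw [h1, h2, TensorProduct.map_id, LinearMap.id_apply]
      rw [← hcomp, hxy, map_sum]
      simp [TensorProduct.map_tmul]
    · rw [hr]
      exact Finset.sum_le_sum fun i _ =>
        mul_le_mul (hPn _) (hQn _) (norm_nonneg _) (norm_nonneg _)
  · -- push forward a representation along the inclusions
    refine le_csInf hAne fun r hr => ?_
    obtain ⟨n, x, y, hxy, hr⟩ := hr
    exact csInf_le hBbd ⟨n, fun i => (x i : X), fun i => (y i : Y), by
      rw [hxy, map_sum]; simp [TensorProduct.map_tmul], by simpa using hr⟩
end
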